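/- Let α, λ ∈ ℝ with α ≠ 0 and define M(t) := α e^{λ t} for t ≥ 0. Then for every integer l ≥ 1, the sets {t ≥ 0 : h_l(t) = 0} and {t ≥ 0 : p_l(t) = 0} each have Lebesgue measure zero; in other words, h_l(t) ≠ 0 and p_l(t) ≠ 0 for almost every t ≥ 0. -/

import Mathlib

open Set MeasureTheory

/-- Convolution on `[0,∞)` (via signed interval integral): `(f*g)(t) = ∫_0^t f(t-s) g(s) ds`. -/
noncomputable def conv (f g : ℝ → ℝ) : ℝ → ℝ :=
  fun t => ∫ s in (0:ℝ)..t, f (t - s) * g s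

/-- `j`-fold convolution power of `M`, with the conventions `M^{*0} = 0` and `M^{*1} = M`. -/
noncomputable def convPow (M : ℝ → ℝ) : ℕ → ℝ → ℝ
  | 0 => fun _ => 0
  | 1 => M
  | (j+2) => conv M (convPow M (j+1))

/-- The norm `‖f‖_{C^k([0,t])} = ∑_{l=0}^k max_{0 ≤ τ ≤ t} |f^{(l)}(τ)|`,
derivatives taken within `[0,∞)`. -/
noncomputable def CkNorm (k : ℕ) (t : ℝ) (f : ℝ → ℝ) : ℝ :=
  ∑ l ∈ Finset.range (k+1), ⨆ τ : Set.Icc (0:ℝ) t, |iteratedDerivWithin l f (Set.Ici 0) τ|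

/-- The coefficient `h_l(t) = (-1)^l ∑_{j=0}^l C(l, l-j) (d^{l-j}/dt^{l-j} M^{*j})(t)`
(derivatives taken within `[0,∞)`; recall the convention `M^{*0} = 0`). -/
noncomputable def hcoef (M : ℝ → ℝ) (l : ℕ) (t : ℝ) : ℝ :=
  (-1 : ℝ) ^ l * ∑ j ∈ Finset.range (l + 1),
    (l.choose (l - j) : ℝ) * iteratedDerivWithin (l - j) (convPow M j) (Set.Ici 0) t

/-- The coefficient
`p_l(t) = −h_l(0) + (-1)^{l+1} ∑_{(m,j)} C(l, l-j+m) ((d^{l-j+m}/dt^{l-j+m}) M^{*j})(0) (-t)^m/m!`,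
where the sum runs over pairs of positive integers `(m,j)` with `2j − l − 1 ≤ m ≤ j`
(equivalently `2j ≤ m + l + 1`; all such pairs satisfy `m ≤ j ≤ l + 1`, and the exponent
`l - j + m` is the natural number `l + m - j ≥ 0`). -/
noncomputable def pcoef (M : ℝ → ℝ) (l : ℕ) (t : ℝ) : ℝ :=
  -hcoef M l 0 + (-1 : ℝ) ^ (l + 1) *
    ∑ j ∈ Finset.Icc 1 (l + 1), ∑ m ∈ Finset.Icc 1 j,
      if 2 * j ≤ m + l + 1 then
        (l.choose (l + m - j) : ℝ) *
          iteratedDerivWithin (l + m - j) (convPow M j) (Set.Ici 0) 0 *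
          ((-t) ^ m / (m.factorial : ℝ))
      else 0

/-!
For the kernel `M(t) = α e^{λt}` one has `M^{*j}(t) = α^j t^{j-1}/(j-1)! · e^{λt}` for `j ≥ 1`,
and differentiation acts on `q(t) e^{λt}` as `q ↦ q' + λq` on the polynomial factor, which does not
raise degrees. Hence `h_l(t) = ±Q(t) e^{λt}` for a polynomial `Q` whose coefficient of `t^{l-1}`
comes only from the term `j = l` and equals `α^l/(l-1)!`. Likewise `p_l` is a polynomial whose
coefficient of `t^{l+1}` comes only from `(m, j) = (l+1, l+1)` and equals `α^{l+1}/(l+1)!`.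
Both polynomials are nonzero, so they have finitely many roots.
-/

open Polynomial

/-- `e^{-λt} (d/dt) e^{λt}`, acting on polynomials. -/
noncomputable def expTwistedDerivative (lam : ℝ) : Module.End ℝ ℝ[X] :=
  derivative + lam • 1

lemma expTwistedDerivative_apply (lam : ℝ) (q : ℝ[X]) :
    expTwistedDerivative lam q = derivative q + lam • q := by
  simp [expTwistedDerivative]

lemma expTwistedDerivative_pow_apply (lam : ℝ) (q : ℝ[X]) (n : ℕ) :
    (expTwistedDerivative lam ^ n) q =
      ∑ i ∈ Finset.range (n + 1), (lam ^ (n - i) * n.choose i) • derivative^[i] q := by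
  have hc : Commute (derivative : Module.End ℝ ℝ[X]) (lam • 1) :=
    (Commute.one_right _).smul_right lam
  rw [expTwistedDerivative, hc.add_pow n, LinearMap.sum_apply]
  refine Finset.sum_congr rfl fun i _ => ?_
  rw [_root_.smul_pow, one_pow, Module.End.mul_apply, Module.End.mul_apply,
    Module.End.natCast_apply, LinearMap.smul_apply, Module.End.one_apply,
    _root_.map_smul, map_nsmul, Module.End.pow_apply, mul_smul, Nat.cast_smul_eq_nsmul]

lemma natDegree_expTwistedDerivative_pow_apply_le (lam : ℝ) (q : ℝ[X]) (n : ℕ) :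
    ((expTwistedDerivative lam ^ n) q).natDegree ≤ q.natDegree := by
  induction n generalizing q with
  | zero => simp
  | succ n ih =>
    rw [pow_succ, Module.End.mul_apply, expTwistedDerivative_apply]
    refine (ih _).trans <| (natDegree_add_le _ _).trans <| max_le ?_ (natDegree_smul_le _ _)
    exact (natDegree_derivative_le q).trans (Nat.sub_le _ _)

lemma eval_zero_expTwistedDerivative_pow_C_mul_X_pow (lam c : ℝ) (n : ℕ) :
    eval 0 ((expTwistedDerivative lam ^ n) (C c * X ^ n)) = c * n.factorial := by
  rw [expTwistedDerivative_pow_apply, eval_finsetSum, Finset.sum_eq_single n]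
  · rw [eval_smul, ← coeff_zero_eq_eval_zero, coeff_iterate_derivative]
    simp only [Nat.sub_self, pow_zero, Nat.choose_self, Nat.cast_one, one_mul, one_smul, zero_add,
      Nat.descFactorial_self, coeff_C_mul_X_pow, if_true, nsmul_eq_mul]
    exact mul_comm _ _
  · intro i _ hin
    rw [eval_smul, ← coeff_zero_eq_eval_zero, coeff_iterate_derivative]
    simp [hin]
  · simp

lemma hasDerivAt_eval_mul_exp (lam : ℝ) (q : ℝ[X]) (t : ℝ) :
    HasDerivAt (fun x => eval x q * Real.exp (lam * x))
      (eval t (expTwistedDerivative lam q) * Real.exp (lam * t)) t := by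
  have hexp : HasDerivAt (fun x => Real.exp (lam * x)) (Real.exp (lam * t) * lam) t := by
    simpa using ((hasDerivAt_id t).const_mul lam).exp
  refine ((q.hasDerivAt t).mul hexp).congr_deriv ?_
  rw [expTwistedDerivative_apply, eval_add, eval_smul, smul_eq_mul]
  ring

lemma iteratedDerivWithin_eval_mul_exp (lam : ℝ) (q : ℝ[X]) {s : Set ℝ}
    (hs : UniqueDiffOn ℝ s) (n : ℕ) :
    Set.EqOn (iteratedDerivWithin n (fun x => eval x q * Real.exp (lam * x)) s)
      (fun x => eval x ((expTwistedDerivative lam ^ n) q) * Real.exp (lam * x)) s := by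
  induction n with
  | zero => intro x _; simp
  | succ n ih =>
    intro x hx
    rw [iteratedDerivWithin_succ, derivWithin_congr ih (ih hx),
      (hasDerivAt_eval_mul_exp lam _ x).hasDerivWithinAt.derivWithin (hs x hx), pow_succ']
    rfl

noncomputable def expKernelConvPowPoly (α : ℝ) : ℕ → ℝ[X]
  | 0 => 0
  | j + 1 => C (α ^ (j + 1) / j.factorial) * X ^ j

lemma convPow_expKernel_succ (α lam : ℝ) (j : ℕ) :
    convPow (fun s => α * Real.exp (lam * s)) (j + 1) =
      fun t => α ^ (j + 1) / j.factorial * t ^ j * Real.exp (lam * t) := by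
  induction j with
  | zero => funext t; simp [convPow]
  | succ j ih =>
    funext t
    have hintegrand : ∀ s, α * Real.exp (lam * (t - s)) *
        (α ^ (j + 1) / j.factorial * s ^ j * Real.exp (lam * s)) =
          α * (α ^ (j + 1) / j.factorial) * Real.exp (lam * t) * s ^ j := fun s => by
      rw [show lam * t = lam * (t - s) + lam * s by ring, Real.exp_add]
      ring
    have hfact : ((j + 1).factorial : ℝ) = (j + 1) * j.factorial := by
      push_cast [Nat.factorial_succ]; ring
    simp only [convPow, conv, ih, hintegrand]
    rw [intervalIntegral.integral_const_mul, integral_pow, zero_pow j.succ_ne_zero, sub_zero,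
      Nat.factorial_succ]
    push_cast
    field_simp
    ring

lemma convPow_expKernel (α lam : ℝ) (j : ℕ) :
    convPow (fun s => α * Real.exp (lam * s)) j =
      fun t => eval t (expKernelConvPowPoly α j) * Real.exp (lam * t) := by
  cases j with
  | zero => funext t; simp [convPow, expKernelConvPowPoly]
  | succ j => rw [convPow_expKernel_succ]; funext t; simp [expKernelConvPowPoly]

lemma natDegree_expKernelConvPowPoly_le (α : ℝ) (j : ℕ) :
    (expKernelConvPowPoly α j).natDegree ≤ j - 1 := by
  cases j with
  | zero => simp [expKernelConvPowPoly]
  | succ j => exact natDegree_C_mul_X_pow_le _ _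

lemma iteratedDerivWithin_convPow_expKernel (α lam : ℝ) (j n : ℕ) {t : ℝ} (ht : 0 ≤ t) :
    iteratedDerivWithin n (convPow (fun s => α * Real.exp (lam * s)) j) (Set.Ici 0) t =
      eval t ((expTwistedDerivative lam ^ n) (expKernelConvPowPoly α j)) * Real.exp (lam * t) := by
  rw [convPow_expKernel]
  exact iteratedDerivWithin_eval_mul_exp lam _ (uniqueDiffOn_Ici 0) n ht

lemma iteratedDerivWithin_convPow_expKernel_zero (α lam : ℝ) (l : ℕ) :
    iteratedDerivWithin l (convPow (fun s => α * Real.exp (lam * s)) (l + 1)) (Set.Ici 0) 0 =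
      α ^ (l + 1) := by
  rw [iteratedDerivWithin_convPow_expKernel α lam _ _ le_rfl, expKernelConvPowPoly,
    eval_zero_expTwistedDerivative_pow_C_mul_X_pow]
  simp [l.factorial_ne_zero]

noncomputable def expKernelHcoefPoly (α lam : ℝ) (l : ℕ) : ℝ[X] :=
  ∑ j ∈ Finset.range (l + 1),
    (l.choose (l - j) : ℝ) • (expTwistedDerivative lam ^ (l - j)) (expKernelConvPowPoly α j)

lemma hcoef_expKernel (α lam : ℝ) (l : ℕ) {t : ℝ} (ht : 0 ≤ t) :
    hcoef (fun s => α * Real.exp (lam * s)) l t =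
      (-1) ^ l * (eval t (expKernelHcoefPoly α lam l) * Real.exp (lam * t)) := by
  rw [hcoef, expKernelHcoefPoly, eval_finsetSum, Finset.sum_mul]
  congr 1
  refine Finset.sum_congr rfl fun j _ => ?_
  rw [iteratedDerivWithin_convPow_expKernel α lam j _ ht, eval_smul, smul_eq_mul, mul_assoc]

lemma coeff_expKernelHcoefPoly (α lam : ℝ) (k : ℕ) :
    (expKernelHcoefPoly α lam (k + 1)).coeff k = α ^ (k + 1) / k.factorial := by
  rw [expKernelHcoefPoly, finsetSum_coeff, Finset.sum_eq_single (k + 1)]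
  · simp [expKernelConvPowPoly]
  · rintro (_ | j) hj hjk
    · simp [expKernelConvPowPoly]
    have hdeg : ((expTwistedDerivative lam ^ (k + 1 - (j + 1)))
        (expKernelConvPowPoly α (j + 1))).natDegree < k := by
      have := natDegree_expKernelConvPowPoly_le α (j + 1)
      have := natDegree_expTwistedDerivative_pow_apply_le lam (expKernelConvPowPoly α (j + 1))
        (k + 1 - (j + 1))
      rw [Finset.mem_range] at hj
      omega
    rw [coeff_smul, coeff_eq_zero_of_natDegree_lt hdeg, smul_zero]
  · simp

noncomputable def pcoefPoly (M : ℝ → ℝ) (l : ℕ) : ℝ[X] :=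
  C (-hcoef M l 0) + C ((-1) ^ (l + 1)) *
    ∑ j ∈ Finset.Icc 1 (l + 1), ∑ m ∈ Finset.Icc 1 j,
      C (if 2 * j ≤ m + l + 1 then
          (l.choose (l + m - j) : ℝ) * iteratedDerivWithin (l + m - j) (convPow M j) (Set.Ici 0) 0
            * ((-1) ^ m / m.factorial)
        else 0) * X ^ m

lemma pcoef_eq_eval_pcoefPoly (M : ℝ → ℝ) (l : ℕ) (t : ℝ) :
    pcoef M l t = eval t (pcoefPoly M l) := by
  simp only [pcoef, pcoefPoly, eval_add, eval_mul, eval_C, eval_finsetSum, eval_pow, eval_X]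
  congr 2
  refine Finset.sum_congr rfl fun j _ => Finset.sum_congr rfl fun m _ => ?_
  split_ifs
  · rw [neg_pow]; ring
  · simp

lemma coeff_pcoefPoly_succ (M : ℝ → ℝ) (l : ℕ) :
    (pcoefPoly M l).coeff (l + 1) =
      iteratedDerivWithin l (convPow M (l + 1)) (Set.Ici 0) 0 / (l + 1).factorial := by
  simp only [pcoefPoly, coeff_add, coeff_C, coeff_C_mul, finsetSum_coeff, coeff_X_pow, mul_ite,
    mul_one, mul_zero, Finset.sum_ite_eq, Finset.mem_Icc]
  rw [Finset.sum_eq_single (l + 1)]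
  · rw [if_neg l.succ_ne_zero, if_pos ⟨l.succ_pos, le_rfl⟩, if_pos (by omega),
      Nat.add_sub_cancel, Nat.choose_self, Nat.cast_one, one_mul, zero_add, mul_div_assoc',
      mul_div_assoc', mul_left_comm, ← pow_add, Even.neg_one_pow ⟨l + 1, rfl⟩, mul_one]
  · intro j hj hjl
    rw [Finset.mem_Icc] at hj
    exact if_neg (by omega)
  · simp

lemma volume_setOf_nonneg_and_eq_zero {f : ℝ → ℝ} {P : ℝ[X]} (hP : P ≠ 0)
    (hf : ∀ t, 0 ≤ t → f t = 0 → P.IsRoot t) :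
    volume {t : ℝ | 0 ≤ t ∧ f t = 0} = 0 :=
  measure_mono_null (fun t ⟨ht, hft⟩ => hf t ht hft)
    ((finite_setOfPred_isRoot hP).measure_zero _)

/-- For `M(t) = α e^{λt}` with `α ≠ 0` and every integer `l ≥ 1`, the sets
`{t ≥ 0 : h_l(t) = 0}` and `{t ≥ 0 : p_l(t) = 0}` have Lebesgue measure zero; i.e.
`h_l(t) ≠ 0` and `p_l(t) ≠ 0` for almost every `t ≥ 0`. -/
theorem hcoef_pcoef_ae_nonzero_exp_kernel
    (α lam : ℝ) (hα : α ≠ 0) (l : ℕ) (hl : 1 ≤ l) :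
    MeasureTheory.volume
        {t : ℝ | 0 ≤ t ∧ hcoef (fun s => α * Real.exp (lam * s)) l t = 0} = 0 ∧
      MeasureTheory.volume
        {t : ℝ | 0 ≤ t ∧ pcoef (fun s => α * Real.exp (lam * s)) l t = 0} = 0 := by
  obtain ⟨k, rfl⟩ := Nat.exists_eq_add_of_le' hl
  have hcoeff_ne : ∀ m n : ℕ, α ^ m / n.factorial ≠ 0 := fun m n =>
    div_ne_zero (pow_ne_zero _ hα) (Nat.cast_ne_zero.mpr n.factorial_ne_zero)
  constructor
  · refine volume_setOf_nonneg_and_eq_zero (P := expKernelHcoefPoly α lam (k + 1))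
      (fun h => hcoeff_ne (k + 1) k ?_) fun t ht h => ?_
    · rw [← coeff_expKernelHcoefPoly α lam k, h, coeff_zero]
    · simpa [hcoef_expKernel α lam _ ht, Real.exp_ne_zero] using h
  · refine volume_setOf_nonneg_and_eq_zero
      (P := pcoefPoly (fun s => α * Real.exp (lam * s)) (k + 1))
      (fun h => hcoeff_ne (k + 1 + 1) (k + 1 + 1) ?_) fun t _ h => ?_
    · rw [← iteratedDerivWithin_convPow_expKernel_zero α lam, ← coeff_pcoefPoly_succ, h,
        coeff_zero]
    · rwa [pcoef_eq_eval_pcoefPoly] at h
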